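/- In the Misra–Gries algorithm with c counters on a stream of length n, each decrement step removes c+1 stream occurrences' worth of counts (c decrements plus the unmonitored arriving element), so the number of decrement steps is at most n/(c+1), and consequently the final counter value for any element x satisfies count(x) ≥ f(x) − n/(c+1) where f(x) is the true frequency of x. -/

import Mathlib

/-- One step of the Misra–Gries (GM) algorithm with `c` counters, additionally
tracking the number of decrement steps performed.  The first component records the
counter value of each monitored element (elements with value `0` are unmonitored) and
the second component counts decrement steps. -/
noncomputable def mgStepD {α : Type*} [DecidableEq α] (c : ℕ) (fd : (α →₀ ℕ) × ℕ)
    (a : α) : (α →₀ ℕ) × ℕ :=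
  if 0 < fd.1 a then (fd.1.update a (fd.1 a + 1), fd.2)
  else if fd.1.support.card < c then (fd.1.update a 1, fd.2)
  else (Finsupp.mapRange (· - 1) (by simp) fd.1, fd.2 + 1)

/-!
Track the potential `Φ = (sum of the counters) + (c + 1) · D`. Each arrival raises `Φ` by
exactly one: it either increments one counter, or, when all `c` counters are in use and the
arriving element is not monitored, decrements `c` counters and adds one to `D`. Hence
`(c + 1) · D ≤ Φ = n`. Each occurrence of `x` raises `count(x) + D` by at least one, since
a decrement step that lowers the counter of `x` also raises `D`; so `f(x) ≤ count(x) + D`.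
-/

open Finset

namespace Finsupp

variable {ι : Type*}

theorem degree_update_add {M : Type*} [AddCommMonoid M] (f : ι →₀ M) (a : ι) (b : M) :
    (f.update a b).degree + f a = f.degree + b :=
  sum_update_add f a b (fun _ v => v) (fun _ => rfl) (fun _ _ _ => rfl)

theorem degree_mapRange_pred_add_card_support (f : ι →₀ ℕ) :
    (f.mapRange (· - 1) (by simp)).degree + #f.support = f.degree := by
  change (f.mapRange _ _).sum (fun _ v => v) + _ = f.sum fun _ v => v
  rw [sum_mapRange_index fun _ => rfl, card_eq_sum_ones, Finsupp.sum, Finsupp.sum,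
    ← Finset.sum_add_distrib]
  refine Finset.sum_congr rfl fun i hi => ?_
  have := mem_support_iff.mp hi
  omega

end Finsupp

section MisraGries

variable {α : Type*} [DecidableEq α] {c : ℕ}

theorem card_support_mgStepD_le {p : (α →₀ ℕ) × ℕ} (h : #p.1.support ≤ c) (a : α) :
    #(mgStepD c p a).1.support ≤ c := by
  unfold mgStepD
  split_ifs with hpos hlt <;> dsimp only
  · rwa [Finsupp.support_update_ne_zero (h := by omega), insert_eq_of_mem
      (Finsupp.mem_support_iff.mpr hpos.ne')]
  · rw [Finsupp.support_update_ne_zero (h := one_ne_zero)]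
    exact (card_insert_le _ _).trans hlt
  · exact (card_le_card Finsupp.support_mapRange).trans h

theorem degree_mgStepD {p : (α →₀ ℕ) × ℕ} (h : #p.1.support ≤ c) (a : α) :
    (mgStepD c p a).1.degree + (c + 1) * (mgStepD c p a).2
      = p.1.degree + (c + 1) * p.2 + 1 := by
  unfold mgStepD
  split_ifs <;> dsimp only
  · have := p.1.degree_update_add a (p.1 a + 1)
    omega
  · have := p.1.degree_update_add a 1
    omega
  · have := p.1.degree_mapRange_pred_add_card_support
    rw [mul_add, mul_one]
    omega

theorem apply_add_le_mgStepD_apply (p : (α →₀ ℕ) × ℕ) (a x : α) :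
    p.1 x + p.2 + (if a = x then 1 else 0) ≤ (mgStepD c p a).1 x + (mgStepD c p a).2 := by
  unfold mgStepD
  split_ifs <;> simp_all [Finsupp.update_apply, eq_comm] <;> omega

theorem card_support_foldl_mgStepD_le (s : List α) {p : (α →₀ ℕ) × ℕ}
    (h : #p.1.support ≤ c) : #(s.foldl (mgStepD c) p).1.support ≤ c := by
  induction s generalizing p with
  | nil => exact h
  | cons a s ih => exact ih (card_support_mgStepD_le h a)

theorem degree_foldl_mgStepD (s : List α) {p : (α →₀ ℕ) × ℕ} (h : #p.1.support ≤ c) :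
    (s.foldl (mgStepD c) p).1.degree + (c + 1) * (s.foldl (mgStepD c) p).2
      = p.1.degree + (c + 1) * p.2 + s.length := by
  induction s generalizing p with
  | nil => rfl
  | cons a s ih =>
    rw [List.foldl_cons, ih (card_support_mgStepD_le h a), degree_mgStepD h, List.length_cons]
    ring

theorem count_add_le_foldl_mgStepD (s : List α) (p : (α →₀ ℕ) × ℕ) (x : α) :
    s.count x + p.1 x + p.2 ≤ (s.foldl (mgStepD c) p).1 x + (s.foldl (mgStepD c) p).2 := by
  induction s generalizing p with
  | nil => simp
  | cons a s ih =>
    have hstep := apply_add_le_mgStepD_apply (c := c) p a x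
    have hrest := ih (mgStepD c p a)
    simp only [List.foldl_cons, List.count_cons, beq_iff_eq] at hrest ⊢
    omega

end MisraGries

theorem mg_decrements_and_undercount_general {α : Type*} [DecidableEq α]
    (c : ℕ) (s : List α) :
    ((s.foldl (mgStepD c) (0, 0)).2 : ℝ) ≤ (s.length : ℝ) / (c + 1) ∧
      ∀ x : α, (s.count x : ℝ) - (s.length : ℝ) / (c + 1)
        ≤ ((s.foldl (mgStepD c) (0, 0)).1 x : ℝ) := by
  set D := (s.foldl (mgStepD c) (0, 0)).2
  have hD : (c + 1) * D ≤ s.length := by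
    have hΦ := degree_foldl_mgStepD (c := c) s (p := (0, 0)) (by simp)
    simp only [map_zero, mul_zero, zero_add] at hΦ
    exact le_add_self.trans hΦ.le
  have hDR : (D : ℝ) ≤ s.length / (c + 1) := by
    rw [le_div_iff₀ (by positivity), mul_comm]
    exact_mod_cast hD
  refine ⟨hDR, fun x => ?_⟩
  have hx : (s.count x : ℝ) ≤ (s.foldl (mgStepD c) (0, 0)).1 x + D := by
    exact_mod_cast by simpa using count_add_le_foldl_mgStepD (c := c) s (0, 0) x
  linarith

/-- In the Misra–Gries algorithm with `c` counters on a stream of length `n`, the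
number `D` of decrement steps is at most `n/(c+1)` (each decrement step accounts for
`c+1` stream occurrences: `c` decrements plus the unmonitored arriving element), and
consequently the final counter value of any element `x` underestimates its true
frequency by at most `n/(c+1)`. -/
theorem mg_decrements_and_undercount {α : Type*} [DecidableEq α]
    (c : ℕ) (hc : 1 ≤ c) (s : List α) :
    ((s.foldl (mgStepD c) (0, 0)).2 : ℝ) ≤ (s.length : ℝ) / (c + 1) ∧
      ∀ x : α, (s.count x : ℝ) - (s.length : ℝ) / (c + 1)
        ≤ ((s.foldl (mgStepD c) (0, 0)).1 x : ℝ) :=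
  mg_decrements_and_undercount_general c s
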